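/- arXiv:1105.2985 — 14 statements merged into one kernel-verified Lean document; each statement's English description precedes it below -/
import Mathlib

section
/- Let B be an N×N skew-symmetric integer matrix. Then B defines a cluster mutation-periodic quiver with period 1, i.e. μ_1(B)_{j,k} = B_{j-1,k-1} for all j,k (indices taken modulo N in {1,…,N}, equivalently μ_1(B) = ρ B ρ^{-1} where ρ is the permutation matrix of the cyclic shift i ↦ i+1 mod N), if and only if the entries of B satisfy: (i) b_{j,N} = b_{1,j+1} for j = 1,…,N-1, and (ii) b_{j+1,k+1} = b_{j,k} + b_{1,j+1}[-b_{1,k+1}]_+ - b_{1,k+1}[-b_{1,j+1}]_+ for 1 ≤ j,k ≤ N-1. -/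
open Matrix

/-- The matrix mutation `μ_k` of an `N × N` integer matrix `B`:
`b̃_{jℓ} = -b_{jℓ}` if `j = k` or `ℓ = k`, and otherwise
`b̃_{jℓ} = b_{jℓ} + (|b_{jk}| b_{kℓ} + b_{jk} |b_{kℓ}|)/2`. -/
def matrixMutation {N : ℕ} (k : Fin N) (B : Matrix (Fin N) (Fin N) ℤ) :
    Matrix (Fin N) (Fin N) ℤ :=
  fun j ℓ =>
    if j = k ∨ ℓ = k then -B j ℓ
    else B j ℓ + (|B j k| * B k ℓ + B j k * |B k ℓ|) / 2

/-!
Conjugation by `ρ` turns period one into `μ₁(B)_{j+1,k+1} = b_{j,k}` for all `j, k`. When `j` or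
`k` is the last index, one side lies in the first row or column, where `μ₁` only flips signs, so by
skew-symmetry these equations are (i) (or hold trivially at the corner). The remaining equations
are (ii), because `(|x| y - x |y|) / 2 = y [-x]₊ - x [-y]₊`, with `x = b_{1,j+1}`, `y = b_{1,k+1}`.
-/

theorem abs_mul_sub_mul_abs_eq_two_mul {α : Type*} [CommRing α] [LinearOrder α]
    [IsOrderedRing α] (x y : α) : |x| * y - x * |y| = 2 * (y * x⁻ - x * y⁻) := by
  rw [← posPart_add_negPart x, ← posPart_add_negPart y]
  linear_combination y * posPart_sub_negPart x - x * posPart_sub_negPart y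

theorem Fin.add_one_eq_zero_iff {n : ℕ} {j : Fin (n + 1)} : j + 1 = 0 ↔ j = Fin.last n := by
  rw [← Fin.last_add_one n, add_left_inj]

section Mutation

variable {N : ℕ} (B : Matrix (Fin N) (Fin N) ℤ) {k : Fin N}

theorem matrixMutation_apply_left_self (ℓ : Fin N) : matrixMutation k B k ℓ = -B k ℓ := by
  simp [matrixMutation]

theorem matrixMutation_apply_right_self (j : Fin N) : matrixMutation k B j k = -B j k := by
  simp [matrixMutation]

theorem matrixMutation_apply_of_ne {j ℓ : Fin N} (hj : j ≠ k) (hℓ : ℓ ≠ k)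
    (hskew : B j k = -B k j) :
    matrixMutation k B j ℓ = B j ℓ + (B k ℓ * max (-B k j) 0 - B k j * max (-B k ℓ) 0) := by
  rw [matrixMutation, if_neg (by tauto), hskew, abs_neg, neg_mul, ← sub_eq_add_neg,
    abs_mul_sub_mul_abs_eq_two_mul, Int.mul_ediv_cancel_left _ two_ne_zero]
  rfl

end Mutation

theorem Matrix.apply_swap_of_transpose_eq_neg {m α : Type*} [Neg α] {A : Matrix m m α}
    (hA : Aᵀ = -A) (i j : m) : A j i = -A i j := by
  simpa using congr_fun₂ hA i j

section Skew

variable {n : ℕ} {B : Matrix (Fin (n + 1)) (Fin (n + 1)) ℤ}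

theorem matrixMutation_zero_apply_last_add_one_self (hB : Bᵀ = -B) :
    matrixMutation 0 B (Fin.last n + 1) (Fin.last n + 1) = B (Fin.last n) (Fin.last n) := by
  have h₀ := apply_swap_of_transpose_eq_neg hB 0 0
  have hl := apply_swap_of_transpose_eq_neg hB (Fin.last n) (Fin.last n)
  rw [Fin.last_add_one, matrixMutation_apply_left_self]
  omega

theorem matrixMutation_zero_apply_last_add_one_left_eq_iff (hB : Bᵀ = -B) (k : Fin (n + 1)) :
    matrixMutation 0 B (Fin.last n + 1) (k + 1) = B (Fin.last n) k ↔
      B k (Fin.last n) = B 0 (k + 1) := by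
  rw [Fin.last_add_one, matrixMutation_apply_left_self,
    apply_swap_of_transpose_eq_neg hB k (Fin.last n)]
  omega

theorem matrixMutation_zero_apply_last_add_one_right_eq_iff (hB : Bᵀ = -B) (j : Fin (n + 1)) :
    matrixMutation 0 B (j + 1) (Fin.last n + 1) = B j (Fin.last n) ↔
      B j (Fin.last n) = B 0 (j + 1) := by
  rw [Fin.last_add_one, matrixMutation_apply_right_self,
    apply_swap_of_transpose_eq_neg hB 0 (j + 1)]
  omega

theorem matrixMutation_zero_apply_add_one_eq_iff (hB : Bᵀ = -B) {j k : Fin (n + 1)}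
    (hj : j ≠ Fin.last n) (hk : k ≠ Fin.last n) :
    matrixMutation 0 B (j + 1) (k + 1) = B j k ↔
      B (j + 1) (k + 1) = B j k + B 0 (j + 1) * max (-B 0 (k + 1)) 0
        - B 0 (k + 1) * max (-B 0 (j + 1)) 0 := by
  rw [matrixMutation_apply_of_ne B (mt Fin.add_one_eq_zero_iff.mp hj)
    (mt Fin.add_one_eq_zero_iff.mp hk) (apply_swap_of_transpose_eq_neg hB _ _)]
  omega

end Skew

/-- A skew-symmetric integer matrix `B` (indices `0,…,n` corresponding to the paper's
`1,…,N` with `N = n+1`) defines a cluster mutation-periodic quiver with period 1,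
i.e. `μ_1(B)_{j,k} = B_{j-1,k-1}` with indices taken cyclically (equivalently
`μ_1(B) = ρ B ρ⁻¹` for the cyclic shift `ρ`), if and only if
(i) `b_{j,N} = b_{1,j+1}` for `j = 1,…,N-1`, and
(ii) `b_{j+1,k+1} = b_{j,k} + b_{1,j+1}[-b_{1,k+1}]₊ - b_{1,k+1}[-b_{1,j+1}]₊`
for `1 ≤ j,k ≤ N-1`, where `[b]₊ = max b 0`. -/
theorem period_one_iff {n : ℕ} (B : Matrix (Fin (n + 1)) (Fin (n + 1)) ℤ)
    (hB : Bᵀ = -B) :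
    (∀ j k : Fin (n + 1), matrixMutation 0 B j k = B (j - 1) (k - 1)) ↔
      ((∀ j : Fin (n + 1), j ≠ Fin.last n → B j (Fin.last n) = B 0 (j + 1)) ∧
        (∀ j k : Fin (n + 1), j ≠ Fin.last n → k ≠ Fin.last n →
          B (j + 1) (k + 1) =
            B j k + B 0 (j + 1) * max (-B 0 (k + 1)) 0
              - B 0 (k + 1) * max (-B 0 (j + 1)) 0)) := by
  have reindex : (∀ j k, matrixMutation 0 B j k = B (j - 1) (k - 1)) ↔
      ∀ j k, matrixMutation 0 B (j + 1) (k + 1) = B j k :=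
    ⟨fun H j k => by simpa using H (j + 1) (k + 1),
      fun H j k => by simpa using H (j - 1) (k - 1)⟩
  rw [reindex]
  constructor
  · intro H
    exact ⟨fun j _ => (matrixMutation_zero_apply_last_add_one_right_eq_iff hB j).mp (H j _),
      fun j k hj hk => (matrixMutation_zero_apply_add_one_eq_iff hB hj hk).mp (H j k)⟩
  · rintro ⟨hlast, hgen⟩ j k
    rcases eq_or_ne j (Fin.last n) with rfl | hj <;> rcases eq_or_ne k (Fin.last n) with rfl | hk
    · exact matrixMutation_zero_apply_last_add_one_self hB
    · exact (matrixMutation_zero_apply_last_add_one_left_eq_iff hB k).mpr (hlast k hk)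
    · exact (matrixMutation_zero_apply_last_add_one_right_eq_iff hB j).mpr (hlast j hj)
    · exact (matrixMutation_zero_apply_add_one_eq_iff hB hj hk).mpr (hgen j k hj hk)
end

section
/- Let B be an N×N skew-symmetric integer matrix whose entries satisfy b_{j,N} = b_{1,j+1} for j = 1,…,N-1, and b_{j+1,k+1} = b_{j,k} + b_{1,j+1}[-b_{1,k+1}]_+ - b_{1,k+1}[-b_{1,j+1}]_+ for 1 ≤ j,k ≤ N-1. Then the top-row vector (b_{1,2},…,b_{1,N}) is palindromic: writing a_j = b_{1,j+1}, one has a_j = a_{N-j} for all j = 1,…,N-1. -/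
/-!
Write `a_r = b_{1,r+1}` (0-based: `a r = B 0 r`). Telescoping the period-1 relation along the
`r`-th superdiagonal from `b_{1,r+1}` to `b_{N-r,N}`, which relation (i) identifies with
`a_{N-r}`, gives `a_{N-r} = a_r + Σ_j f(a_j, a_{j+r})` with the antisymmetric
`f(x, y) = x[-y]₊ - y[-x]₊`. By downward induction on `r`, the palindromy already known for
larger indices makes the sum antisymmetric under reversal of the summation range, so it vanishes.
-/

open Matrix Finset Fin.NatCast

lemma Fin.natCast_ne_last {n i : ℕ} (hi : i < n) : (i : Fin (n + 1)) ≠ Fin.last n := by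
  rw [← Fin.lt_last_iff_ne_last, Fin.lt_def, Fin.val_cast_of_lt (by omega)]
  simpa using hi

def crossTerm (x y : ℤ) : ℤ := x * max (-y) 0 - y * max (-x) 0

lemma crossTerm_swap (x y : ℤ) : crossTerm y x = -crossTerm x y := by
  unfold crossTerm; ring

lemma sum_range_eq_zero_of_reflect_eq_neg {N : ℕ} {g : ℕ → ℤ}
    (hg : ∀ j < N, g (N - 1 - j) = -g j) : ∑ j ∈ range N, g j = 0 := by
  have h : ∑ j ∈ range N, g j = -∑ j ∈ range N, g j := calc
    ∑ j ∈ range N, g j = ∑ j ∈ range N, g (N - 1 - j) := (sum_range_reflect g N).symm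
    _ = -∑ j ∈ range N, g j := by
      rw [← sum_neg_distrib]
      exact sum_congr rfl fun j hj => hg j (mem_range.mp hj)
  omega

section diagonal

variable {n : ℕ} {b : ℕ → ℕ → ℤ}
    (hdiag : ∀ j k, j < n → k < n →
      b (j + 1) (k + 1) = b j k + crossTerm (b 0 (j + 1)) (b 0 (k + 1)))

include hdiag

lemma superdiag_eq_add_sum {m r : ℕ} (hmr : m + r ≤ n) :
    b m (m + r) = b 0 r + ∑ j ∈ range m, crossTerm (b 0 (j + 1)) (b 0 (j + 1 + r)) := by
  induction m with
  | zero => simp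
  | succ m ih =>
    rw [sum_range_succ, ← add_assoc, ← ih (by omega), show m + 1 + r = m + r + 1 by omega,
      hdiag m (m + r) (by omega) (by omega)]

lemma top_row_reflect_eq_add_sum (hlast : ∀ j < n, b j n = b 0 (j + 1)) {r : ℕ}
    (hr : 1 ≤ r) (hrn : r ≤ n) :
    b 0 (n + 1 - r) =
      b 0 r + ∑ j ∈ range (n - r), crossTerm (b 0 (j + 1)) (b 0 (j + 1 + r)) := by
  have h := superdiag_eq_add_sum hdiag (m := n - r) (r := r) (by omega)
  rwa [Nat.sub_add_cancel hrn, hlast (n - r) (by omega),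
    show n - r + 1 = n + 1 - r by omega] at h

end diagonal

lemma palindrome_of_reflect_eq_add_sum {n : ℕ} {a : ℕ → ℤ}
    (hrefl : ∀ r, 1 ≤ r → r ≤ n →
      a (n + 1 - r) = a r + ∑ j ∈ range (n - r), crossTerm (a (j + 1)) (a (j + 1 + r)))
    {r : ℕ} (hr : 1 ≤ r) (hrn : r ≤ n) : a r = a (n + 1 - r) := by
  induction hd : n - r using Nat.strong_induction_on generalizing r with
  | _ d ih =>
    have hsym : ∀ s, r < s → s ≤ n → a s = a (n + 1 - s) := fun s hrs hsn =>
      ih (n - s) (by omega) (by omega) hsn rfl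
    rw [hrefl r hr hrn, left_eq_add]
    refine sum_range_eq_zero_of_reflect_eq_neg fun j hj => ?_
    have e1 : a (n - j) = a (j + 1) := by
      rw [hsym (n - j) (by omega) (by omega), show n + 1 - (n - j) = j + 1 by omega]
    have e2 : a (n - r - j) = a (j + 1 + r) := by
      rw [hsym (j + 1 + r) (by omega) (by omega), show n + 1 - (j + 1 + r) = n - r - j by omega]
    show crossTerm (a (n - r - 1 - j + 1)) (a (n - r - 1 - j + 1 + r)) = _
    rw [show n - r - 1 - j + 1 = n - r - j by omega, show n - r - j + r = n - j by omega, e1, e2,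
      crossTerm_swap]

/-- If a skew-symmetric integer matrix `B` (indices `0,…,n` corresponding to the paper's
`1,…,N` with `N = n+1`) satisfies the period-1 relations
(i) `b_{j,N} = b_{1,j+1}` for `j = 1,…,N-1`, and
(ii) `b_{j+1,k+1} = b_{j,k} + b_{1,j+1}[-b_{1,k+1}]₊ - b_{1,k+1}[-b_{1,j+1}]₊`
for `1 ≤ j,k ≤ N-1` (where `[b]₊ = max b 0`), then the top-row vector
`(b_{1,2},…,b_{1,N})`, i.e. `a_j = b_{1,j+1}`, is palindromic: `a_j = a_{N-j}`
for `j = 1,…,N-1`.  In 0-based indexing, `a_j = B 0 j` for `1 ≤ j ≤ n`, and the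
conclusion reads `B 0 j = B 0 (n + 1 - j)`. -/
theorem period_one_top_row_palindromic {n : ℕ}
    (B : Matrix (Fin (n + 1)) (Fin (n + 1)) ℤ)
    (h1 : ∀ j : Fin (n + 1), j ≠ Fin.last n → B j (Fin.last n) = B 0 (j + 1))
    (h2 : ∀ j k : Fin (n + 1), j ≠ Fin.last n → k ≠ Fin.last n →
      B (j + 1) (k + 1) =
        B j k + B 0 (j + 1) * max (-B 0 (k + 1)) 0
          - B 0 (k + 1) * max (-B 0 (j + 1)) 0) :
    ∀ j : ℕ, (hj1 : 1 ≤ j) → (hjn : j ≤ n) →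
      B 0 ⟨j, by omega⟩ = B 0 ⟨n + 1 - j, by omega⟩ := by
  intro j hj1 hjn
  let b : ℕ → ℕ → ℤ := fun i k => B (i : Fin (n + 1)) (k : Fin (n + 1))
  have hdiag : ∀ i k, i < n → k < n →
      b (i + 1) (k + 1) = b i k + crossTerm (b 0 (i + 1)) (b 0 (k + 1)) := fun i k hi hk => by
    simp only [b, crossTerm, Nat.cast_add, Nat.cast_one, Nat.cast_zero,
      h2 _ _ (Fin.natCast_ne_last hi) (Fin.natCast_ne_last hk)]
    ring
  have hlast : ∀ i < n, b i n = b 0 (i + 1) := fun i hi => by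
    simp only [b, Fin.natCast_eq_last, Nat.cast_add, Nat.cast_one, Nat.cast_zero,
      h1 _ (Fin.natCast_ne_last hi)]
  have h := palindrome_of_reflect_eq_add_sum
    (fun r hr hrn => top_row_reflect_eq_add_sum hdiag hlast hr hrn) hj1 hjn
  simp only [b, Nat.cast_zero] at h
  rwa [Fin.natCast_eq_mk (Nat.lt_succ_of_le hjn),
    Fin.natCast_eq_mk (show n + 1 - j < n + 1 by omega)] at h
end

section
/- Let φ: (ℂ*)^5 → ℂ^5 be the Somos-5 map φ(x_1,…,x_5) = (x_2, x_3, x_4, x_5, (x_2 x_5 + x_3 x_4)/x_1), with components φ_1,…,φ_5. Then φ preserves the log-canonical Poisson bracket with coefficient matrix c_{jk} = j - k: for all j, k ∈ {1,…,5} and all x with nonzero coordinates, Σ_{a=1}^{5} Σ_{b=1}^{5} (a-b) x_a x_b (∂φ_j/∂x_a)(∂φ_k/∂x_b) = (j-k) φ_j(x) φ_k(x). -/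
/-!
The bracket `{f, g} = ∑_{a,b} (a - b) x_a x_b ∂_a f ∂_b g` splits as `W f · E g - E f · W g`, where
`E = ∑ x_a ∂_a` is the Euler operator and `W = ∑ a x_a ∂_a` its weighted version. Each component
`φ_j` is homogeneous of degree `1` for the standard grading and of degree `j + 1` for the grading
`deg x_a = a` (for `φ_4` because `1 + 4 = 2 + 3`), so Euler's identity gives `E φ_j = φ_j` and
`W φ_j = (j + 1) φ_j`, whence `{φ_j, φ_k} = (j - k) φ_j φ_k`.
-/

open scoped BigOperators

/-- `x i` is the paper's `x_{i+1}`. -/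
noncomputable def somos5Map (x : Fin 5 → ℂ) : Fin 5 → ℂ :=
  ![x 1, x 2, x 3, x 4, (x 1 * x 4 + x 2 * x 3) / x 0]

open Complex

theorem Finset.sum_sum_sub_mul_eq {ι R : Type*} [Fintype ι] [CommRing R] (w x f g : ι → R) :
    ∑ a, ∑ b, (w a - w b) * x a * x b * f a * g b =
      (∑ a, w a * x a * f a) * (∑ b, x b * g b) - (∑ a, x a * f a) * ∑ b, w b * x b * g b := by
  simp only [Finset.sum_mul_sum, ← Finset.sum_sub_distrib]
  exact Finset.sum_congr rfl fun a _ => Finset.sum_congr rfl fun b _ => by ring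

theorem ContinuousLinearMap.apply_eq_sum_mul_apply_single {ι R : Type*} [Fintype ι]
    [DecidableEq ι] [CommSemiring R] [TopologicalSpace R] (L : (ι → R) →L[R] R) (v : ι → R) :
    L v = ∑ i, v i * L (Pi.single i 1) := by
  conv_lhs => rw [pi_eq_sum_univ' v]
  simp only [map_sum, map_smul, smul_eq_mul]

/-- Euler's identity: differentiate the scaling relation at `t = 0`. -/
theorem sum_mul_fderiv_single_eq_of_scaling {ι : Type*} [Fintype ι] [DecidableEq ι]
    {f : (ι → ℂ) → ℂ} {x : ι → ℂ} (hf : DifferentiableAt ℂ f x) (w : ι → ℂ) (d : ℂ)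
    (hscale : ∀ t : ℂ, f (fun a => exp (t * w a) * x a) = exp (t * d) * f x) :
    ∑ a, w a * x a * fderiv ℂ f x (Pi.single a 1) = d * f x := by
  have hcurve :
      HasDerivAt (fun t : ℂ => fun a => exp (t * w a) * x a) (fun a => w a * x a) 0 := by
    refine hasDerivAt_pi.2 fun a => ?_
    simpa using (((hasDerivAt_id (0 : ℂ)).mul_const (w a)).cexp).mul_const (x a)
  have hcomp := hf.hasFDerivAt.comp_hasDerivAt_of_eq 0 hcurve (by simp)
  have hrhs : HasDerivAt (fun t : ℂ => exp (t * d) * f x) (d * f x) 0 := by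
    simpa using (((hasDerivAt_id (0 : ℂ)).mul_const d).cexp).mul_const (f x)
  have heuler : fderiv ℂ f x (fun a => w a * x a) = d * f x :=
    hcomp.unique (by simpa only [Function.comp_def, hscale] using hrhs)
  rw [← heuler, ContinuousLinearMap.apply_eq_sum_mul_apply_single]

/-- The degree of each component of `somos5Map` for the grading `deg x_a = w a`. -/
def somos5Degree (w : Fin 5 → ℂ) : Fin 5 → ℂ :=
  ![w 1, w 2, w 3, w 4, w 1 + w 4 - w 0]

theorem somos5Degree_const_one : somos5Degree (fun _ => 1) = fun _ => 1 := by
  ext j; fin_cases j <;> simp [somos5Degree]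

theorem somos5Degree_val : somos5Degree (fun a => (a.val : ℂ)) = fun j => (j.val : ℂ) + 1 := by
  ext j; fin_cases j <;> simp [somos5Degree] <;> norm_num

theorem somos5Map_scale (x w : Fin 5 → ℂ) (hw : w 1 + w 4 = w 2 + w 3) (t : ℂ) (j : Fin 5) :
    somos5Map (fun a => exp (t * w a) * x a) j = exp (t * somos5Degree w j) * somos5Map x j := by
  fin_cases j
  · rfl
  · rfl
  · rfl
  · rfl
  have hpair : exp (t * w 2) * exp (t * w 3) = exp (t * w 1) * exp (t * w 4) := by
    rw [← exp_add, ← exp_add, ← mul_add, ← mul_add, hw]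
  show (exp (t * w 1) * x 1 * (exp (t * w 4) * x 4) + exp (t * w 2) * x 2 * (exp (t * w 3) * x 3))
      / (exp (t * w 0) * x 0) = exp (t * (w 1 + w 4 - w 0)) * ((x 1 * x 4 + x 2 * x 3) / x 0)
  calc _ = exp (t * w 1) * exp (t * w 4) * (x 1 * x 4 + x 2 * x 3) / (exp (t * w 0) * x 0) := by
        congr 1; linear_combination (x 2 * x 3) * hpair
    _ = _ := by rw [mul_div_mul_comm, mul_sub, mul_add, exp_sub, exp_add]

theorem differentiableAt_somos5Map {x : Fin 5 → ℂ} (hx : x 0 ≠ 0) (j : Fin 5) :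
    DifferentiableAt ℂ (fun y => somos5Map y j) x := by
  fin_cases j <;> simp [somos5Map] <;> fun_prop (disch := exact hx)

/-- The Somos-5 map preserves the log-canonical Poisson bracket with coefficient
matrix `c_{jk} = j - k`: for all `j,k` and all `x` with nonzero coordinates,
`∑_{a,b} (a-b) x_a x_b (∂φ_j/∂x_a)(∂φ_k/∂x_b) = (j-k) φ_j(x) φ_k(x)`. -/
theorem somos5_preserves_log_canonical_bracket
    (x : Fin 5 → ℂ) (hx : ∀ i, x i ≠ 0) (j k : Fin 5) :
    ∑ a : Fin 5, ∑ b : Fin 5,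
        ((a.val : ℂ) - (b.val : ℂ)) * x a * x b *
          fderiv ℂ (fun y => somos5Map y j) x (Pi.single a 1) *
          fderiv ℂ (fun y => somos5Map y k) x (Pi.single b 1)
      = ((j.val : ℂ) - (k.val : ℂ)) * somos5Map x j * somos5Map x k := by
  have euler (w : Fin 5 → ℂ) (hw : w 1 + w 4 = w 2 + w 3) (i : Fin 5) :=
    sum_mul_fderiv_single_eq_of_scaling (differentiableAt_somos5Map (hx 0) i) w _
      (somos5Map_scale x w hw · i)
  have hweighted (i : Fin 5) : ∑ a : Fin 5, (a.val : ℂ) * x a *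
      fderiv ℂ (fun y => somos5Map y i) x (Pi.single a 1) = ((i.val : ℂ) + 1) * somos5Map x i := by
    simpa only [somos5Degree_val] using euler (fun a => (a.val : ℂ)) (by norm_num) i
  have hplain (i : Fin 5) : ∑ a : Fin 5, x a *
      fderiv ℂ (fun y => somos5Map y i) x (Pi.single a 1) = somos5Map x i := by
    simpa only [somos5Degree_const_one, one_mul] using euler (fun _ => 1) rfl i
  rw [Finset.sum_sum_sub_mul_eq, hweighted, hweighted, hplain, hplain]
  ring
end

section
/- Let x_1,…,x_5 be nonzero elements of a field and set x_6 = (x_2 x_5 + x_3 x_4)/x_1. Define f_1 = x_1 x_3 / x_2², f_2 = x_2 x_4 / x_3², f_3 = x_3 x_5 / x_4², and the shifted Casimir f_3' = x_4 x_6 / x_5². Then f_3' = (f_2 f_3 + 1)/(f_1 f_2² f_3²). In particular, under the Somos-5 map the Casimirs transform as f_1 ↦ f_2, f_2 ↦ f_3, f_3 ↦ (f_2 f_3 + 1)/(f_1 f_2² f_3²). -/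
/-!
Multiplying the Casimirs in consecutive pairs telescopes, `f₁f₂ = x₁x₄/(x₂x₃)` and so on,
so that `f₁f₂²f₃²f₃' = x₁x₆/(x₃x₄)` while `f₂f₃ + 1 = (x₂x₅ + x₃x₄)/(x₃x₄)`.
The transformation rule for `f₃` is therefore exactly the Somos-5 relation
`x₁x₆ = x₂x₅ + x₃x₄`.
-/

section Casimir

variable {F : Type*} [Field F]

def casimir (a b c : F) : F := a * c / b ^ 2

theorem casimir_ne_zero {a b c : F} (ha : a ≠ 0) (hb : b ≠ 0) (hc : c ≠ 0) :
    casimir a b c ≠ 0 :=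
  div_ne_zero (mul_ne_zero ha hc) (pow_ne_zero 2 hb)

theorem casimir_mul_casimir (a b c d : F) : casimir a b c * casimir b c d = a * d / (b * c) := by
  unfold casimir
  rcases eq_or_ne b 0 with rfl | hb
  · simp
  rcases eq_or_ne c 0 with rfl | hc
  · simp
  field_simp

theorem casimir_mul_casimir_sq_mul_casimir_sq_mul_casimir {x1 x2 x3 x4 x5 : F} (x6 : F)
    (h2 : x2 ≠ 0) (h5 : x5 ≠ 0) :
    casimir x1 x2 x3 * casimir x2 x3 x4 ^ 2 * casimir x3 x4 x5 ^ 2 * casimir x4 x5 x6 =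
      x1 * x6 / (x3 * x4) := by
  calc _ = casimir x1 x2 x3 * casimir x2 x3 x4 * (casimir x2 x3 x4 * casimir x3 x4 x5) *
        (casimir x3 x4 x5 * casimir x4 x5 x6) := by ring
    _ = x1 * x4 / (x2 * x3) * (x2 * x5 / (x3 * x4)) * (x3 * x6 / (x4 * x5)) := by
        simp only [casimir_mul_casimir]
    _ = x1 * x6 / (x3 * x4) := by
        rcases eq_or_ne x3 0 with rfl | h3
        · simp
        rcases eq_or_ne x4 0 with rfl | h4
        · simp
        field_simp

theorem casimir_shift_eq_iff_somos5 {x1 x2 x3 x4 x5 : F} (x6 : F) (h1 : x1 ≠ 0) (h2 : x2 ≠ 0)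
    (h3 : x3 ≠ 0) (h4 : x4 ≠ 0) (h5 : x5 ≠ 0) :
    casimir x4 x5 x6 = (casimir x2 x3 x4 * casimir x3 x4 x5 + 1) /
        (casimir x1 x2 x3 * casimir x2 x3 x4 ^ 2 * casimir x3 x4 x5 ^ 2) ↔
      x1 * x6 = x2 * x5 + x3 * x4 := by
  have hden : casimir x1 x2 x3 * casimir x2 x3 x4 ^ 2 * casimir x3 x4 x5 ^ 2 ≠ 0 := by
    have := casimir_ne_zero h1 h2 h3
    have := casimir_ne_zero h2 h3 h4
    have := casimir_ne_zero h3 h4 h5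
    positivity
  rw [eq_div_iff hden, mul_comm, casimir_mul_casimir_sq_mul_casimir_sq_mul_casimir x6 h2 h5,
    casimir_mul_casimir]
  field_simp

end Casimir

/-- Transformation of the Casimirs `f₁ = x₁x₃/x₂²`, `f₂ = x₂x₄/x₃²`, `f₃ = x₃x₅/x₄²`
under the Somos-5 map: with `x₆ = (x₂x₅ + x₃x₄)/x₁`, the shifted Casimir
`f₃' = x₄x₆/x₅²` satisfies `f₃' = (f₂f₃ + 1)/(f₁f₂²f₃²)`.  In particular the
Casimirs transform as `f₁ ↦ f₂`, `f₂ ↦ f₃`, `f₃ ↦ (f₂f₃+1)/(f₁f₂²f₃²)`. -/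
theorem somos5_casimir_transformation {F : Type*} [Field F]
    (x1 x2 x3 x4 x5 x6 f1 f2 f3 f3' : F)
    (h1 : x1 ≠ 0) (h2 : x2 ≠ 0) (h3 : x3 ≠ 0) (h4 : x4 ≠ 0) (h5 : x5 ≠ 0)
    (hx6 : x6 = (x2 * x5 + x3 * x4) / x1)
    (hf1 : f1 = x1 * x3 / x2 ^ 2)
    (hf2 : f2 = x2 * x4 / x3 ^ 2)
    (hf3 : f3 = x3 * x5 / x4 ^ 2)
    (hf3' : f3' = x4 * x6 / x5 ^ 2) :
    f3' = (f2 * f3 + 1) / (f1 * f2 ^ 2 * f3 ^ 2) := by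
  subst hf1 hf2 hf3 hf3'
  refine (casimir_shift_eq_iff_somos5 x6 h1 h2 h3 h4 h5).mpr ?_
  rw [hx6]
  field_simp
end

section
/- Let y_1, y_2 be nonzero elements of a field with y_2 ≠ -1, and define H(u,v) = u + v + 1/u + 1/v + 1/(uv). Then H(y_2, (y_2+1)/(y_1 y_2)) = H(y_1, y_2), i.e. H is invariant under the QRT map (y_1, y_2) ↦ (y_2, (y_2+1)/(y_1 y_2)). -/
/-!
For fixed `v`, `H(u, v) = u + c / u + (v + 1/v)` with `c = 1 + 1/v`, and `u + c / u` is unchanged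
by the Vieta involution `u ↦ c / u`, which sends `u` to `(v + 1) / (u v)`. The QRT map is this
involution followed by the swap `(u, v) ↦ (v, u)`, and `H` is symmetric.
-/

section

variable {F : Type*} [Field F]

def qrtH (u v : F) : F := u + v + 1 / u + 1 / v + 1 / (u * v)

theorem qrtH_comm (u v : F) : qrtH u v = qrtH v u := by
  unfold qrtH
  ring

theorem qrtH_eq_add_div (u v : F) : qrtH u v = u + (1 + v⁻¹) / u + (v + v⁻¹) := by
  unfold qrtH
  ring

theorem qrtH_vieta_left {v : F} (hv : v ≠ 0) (hv1 : v + 1 ≠ 0) (u : F) :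
    qrtH ((v + 1) / (u * v)) v = qrtH u v := by
  have hc : 1 + v⁻¹ ≠ 0 := by
    rw [inv_eq_one_div, one_add_div hv]
    exact div_ne_zero hv1 hv
  have hswap : (v + 1) / (u * v) = (1 + v⁻¹) / u := by
    field_simp
  rw [hswap, qrtH_eq_add_div, qrtH_eq_add_div, div_div_cancel₀ hc]
  ring

end

theorem qrt_first_integral_general {F : Type*} [Field F] (y1 y2 : F)
    (h2 : y2 ≠ 0) (h3 : y2 + 1 ≠ 0) :
    let H : F → F → F := fun u v => u + v + 1 / u + 1 / v + 1 / (u * v)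
    H y2 ((y2 + 1) / (y1 * y2)) = H y1 y2 := by
  show qrtH y2 _ = qrtH y1 y2
  rw [qrtH_comm, qrtH_vieta_left h2 h3]

/-- The function `H(u,v) = u + v + 1/u + 1/v + 1/(uv)` is invariant under the
QRT map `(y₁,y₂) ↦ (y₂,(y₂+1)/(y₁y₂))`. -/
theorem qrt_first_integral {F : Type*} [Field F] (y1 y2 : F)
    (h1 : y1 ≠ 0) (h2 : y2 ≠ 0) (h3 : y2 + 1 ≠ 0) :
    let H : F → F → F := fun u v => u + v + 1 / u + 1 / v + 1 / (u * v)
    H y2 ((y2 + 1) / (y1 * y2)) = H y1 y2 :=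
  qrt_first_integral_general y1 y2 h2 h3
end

section
/- Let B be the 5×5 integer matrix with rows (0,-1,1,1,-1), (1,0,-2,0,1), (-1,2,0,-2,1), (-1,0,2,0,-1), (1,-1,-1,1,0) (the Somos-5 exchange matrix). Let v_1 = (1,-1,-1,1,0)ᵀ and v_2 = (0,1,-1,-1,1)ᵀ. Then B = v_2 v_1ᵀ - v_1 v_2ᵀ; in particular B has rank 2, and the vectors u_1 = (1,1,1,1,1)ᵀ, u_2 = (1,2,3,4,5)ᵀ, u_3 = (1,-1,1,-1,1)ᵀ lie in the kernel of B. -/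
open Matrix
set_option maxHeartbeats 1000000 in

/-- The Somos-5 exchange matrix `B` equals `v₂v₁ᵀ - v₁v₂ᵀ` for
`v₁ = (1,-1,-1,1,0)ᵀ`, `v₂ = (0,1,-1,-1,1)ᵀ`; in particular it has rank 2,
and `u₁ = (1,1,1,1,1)ᵀ`, `u₂ = (1,2,3,4,5)ᵀ`, `u₃ = (1,-1,1,-1,1)ᵀ` lie in its
kernel. -/
theorem somos5_exchange_matrix_structure :
    let B : Matrix (Fin 5) (Fin 5) ℤ :=
      !![0, -1, 1, 1, -1;
         1, 0, -2, 0, 1;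
         -1, 2, 0, -2, 1;
         -1, 0, 2, 0, -1;
         1, -1, -1, 1, 0]
    let v1 : Fin 5 → ℤ := ![1, -1, -1, 1, 0]
    let v2 : Fin 5 → ℤ := ![0, 1, -1, -1, 1]
    B = vecMulVec v2 v1 - vecMulVec v1 v2 ∧
      B.rank = 2 ∧
      B.mulVec ![1, 1, 1, 1, 1] = 0 ∧
      B.mulVec ![1, 2, 3, 4, 5] = 0 ∧
      B.mulVec ![1, -1, 1, -1, 1] = 0 := by
  intro B v1 v2
  refine ⟨?_, ?_, ?_, ?_, ?_⟩
  · ext i j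
    fin_cases i <;> fin_cases j <;>
      simp [B, v1, v2, vecMulVec_apply]
  · -- rank
    apply le_antisymm
    · have hBCD : B = (Matrix.of fun i (j : Fin 2) => ![v2 i, v1 i] j) *
          (Matrix.of fun (i : Fin 2) j => ![v1 j, -v2 j] i) := by
        ext i j
        fin_cases i <;> fin_cases j <;>
          simp [B, v1, v2, Matrix.mul_apply, Fin.sum_univ_succ]
      rw [hBCD]
      calc _ ≤ (Matrix.of fun (i : Fin 2) j => ![v1 j, -v2 j] i).rank :=
            Matrix.rank_mul_le_right _ _
        _ ≤ Fintype.card (Fin 2) := Matrix.rank_le_card_height _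
        _ = 2 := by simp
    · have hP : (Matrix.of fun (i : Fin 2) (j : Fin 5) => if (j : ℕ) = (i : ℕ) then (1:ℤ) else 0) * B *
          (Matrix.of fun (i : Fin 5) (j : Fin 2) => if (i : ℕ) = (j : ℕ) then (1:ℤ) else 0)
          = !![0, -1; 1, 0] := by
        ext i j
        fin_cases i <;> fin_cases j <;>
          simp [B, Matrix.mul_apply, Fin.sum_univ_succ]
      have h2 : (!![0, -1; 1, 0] : Matrix (Fin 2) (Fin 2) ℤ).rank = 2 := by
        rw [Matrix.rank_of_isUnit]
        · simp
        · rw [Matrix.isUnit_iff_isUnit_det]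
          simp [Matrix.det_fin_two]
      calc (2:ℕ) = (!![0, -1; 1, 0] : Matrix (Fin 2) (Fin 2) ℤ).rank := h2.symm
        _ = _ := by rw [← hP]
        _ ≤ ((Matrix.of fun (i : Fin 2) (j : Fin 5) => if (j : ℕ) = (i : ℕ) then (1:ℤ) else 0) * B).rank :=
            Matrix.rank_mul_le_left _ _
        _ ≤ B.rank := Matrix.rank_mul_le_right _ _
  · ext i; fin_cases i <;> simp [B, Matrix.mulVec, dotProduct, Fin.sum_univ_five]
  · ext i; fin_cases i <;> simp [B, Matrix.mulVec, dotProduct, Fin.sum_univ_five]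
  · ext i; fin_cases i <;> simp [B, Matrix.mulVec, dotProduct, Fin.sum_univ_five]
end

section
/- Let B be the 6×6 integer matrix with rows (0,-2,6,-4,6,-2), (2,0,-14,6,-16,6), (-6,14,0,10,6,-4), (4,-6,-10,0,-14,6), (-6,16,-6,14,0,-2), (2,-6,4,-6,2,0). Let v_1 = (1,-3,2,-3,1,0)ᵀ and v_2 = (0,1,-3,2,-3,1)ᵀ. Then B = 2(v_2 v_1ᵀ - v_1 v_2ᵀ); in particular B has rank 2, and the four vectors u_1 = (1,0,-1,0,1,0)ᵀ, u_2 = (0,1,0,-1,0,1)ᵀ, u_3 = (3,1,0,0,0,-1)ᵀ, u_4 = (-1,0,0,0,1,3)ᵀ lie in the kernel of B. -/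
open Matrix

namespace Matrix

variable {m n k R : Type*}

theorem vecMulVec_sub_vecMulVec_eq_mul [Ring R] (a c : m → R) (b d : n → R) :
    vecMulVec a b - vecMulVec c d = (of ![a, -c])ᵀ * of ![b, d] := by
  ext i j
  simp [vecMulVec, mul_apply, Fin.sum_univ_two, sub_eq_add_neg]

theorem rank_vecMulVec_sub_vecMulVec_le [Fintype n] [CommRing R] [StrongRankCondition R]
    (a c : m → R) (b d : n → R) : (vecMulVec a b - vecMulVec c d).rank ≤ 2 := by
  rw [vecMulVec_sub_vecMulVec_eq_mul]
  exact (rank_mul_le_left _ _).trans ((rank_le_card_width _).trans_eq (Fintype.card_fin 2))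

theorem smul_vecMulVec_sub_vecMulVec_mulVec_eq_zero [Fintype n] [Ring R] (r : R) (a c : m → R)
    {b d x : n → R} (hb : b ⬝ᵥ x = 0) (hd : d ⬝ᵥ x = 0) :
    (r • (vecMulVec a b - vecMulVec c d)) *ᵥ x = 0 := by
  simp [smul_mulVec, sub_mulVec, vecMulVec_mulVec, hb, hd]

theorem card_le_rank_of_det_submatrix_ne_zero [Fintype n] [CommRing R] [IsDomain R] [Fintype k]
    [DecidableEq k] (A : Matrix m n R) (r : k → m) (c : k → n) (h : (A.submatrix r c).det ≠ 0) :
    Fintype.card k ≤ A.rank :=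
  (rank_of_det_ne_zero h).symm.le.trans (rank_submatrix_le A r c)

end Matrix

/-- The degenerate exchange matrix `B` of the sixth-order recurrence
`x_{n+6}x_n = x_{n+5}²x_{n+3}⁴x_{n+1}² + (x_{n+4}x_{n+2})⁶` equals
`2(v₂v₁ᵀ - v₁v₂ᵀ)` for `v₁ = (1,-3,2,-3,1,0)ᵀ`, `v₂ = (0,1,-3,2,-3,1)ᵀ`;
in particular it has rank 2, and the four vectors `u₁ = (1,0,-1,0,1,0)ᵀ`,
`u₂ = (0,1,0,-1,0,1)ᵀ`, `u₃ = (3,1,0,0,0,-1)ᵀ`, `u₄ = (-1,0,0,0,1,3)ᵀ`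
lie in its kernel. -/
theorem sixth_order_exchange_matrix_structure :
    let B : Matrix (Fin 6) (Fin 6) ℤ :=
      !![0, -2, 6, -4, 6, -2;
         2, 0, -14, 6, -16, 6;
         -6, 14, 0, 10, 6, -4;
         4, -6, -10, 0, -14, 6;
         -6, 16, -6, 14, 0, -2;
         2, -6, 4, -6, 2, 0]
    let v1 : Fin 6 → ℤ := ![1, -3, 2, -3, 1, 0]
    let v2 : Fin 6 → ℤ := ![0, 1, -3, 2, -3, 1]
    B = 2 • (vecMulVec v2 v1 - vecMulVec v1 v2) ∧
      B.rank = 2 ∧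
      B.mulVec ![1, 0, -1, 0, 1, 0] = 0 ∧
      B.mulVec ![0, 1, 0, -1, 0, 1] = 0 ∧
      B.mulVec ![3, 1, 0, 0, 0, -1] = 0 ∧
      B.mulVec ![-1, 0, 0, 0, 1, 3] = 0 := by
  intro B v1 v2
  have hB : B = 2 • (vecMulVec v2 v1 - vecMulVec v1 v2) := by decide
  have hrank_le : B.rank ≤ 2 := by
    rw [hB, smul_sub, ← smul_vecMulVec, ← smul_vecMulVec]
    exact rank_vecMulVec_sub_vecMulVec_le _ _ _ _
  -- the leading 2 × 2 minor of `B` is `det !![0, -2; 2, 0] = 4`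
  have hrank_ge : 2 ≤ B.rank :=
    card_le_rank_of_det_submatrix_ne_zero B ![0, 1] ![0, 1] (by decide)
  refine ⟨hB, le_antisymm hrank_le hrank_ge, ?_⟩
  rw [hB]
  refine ⟨?_, ?_, ?_, ?_⟩ <;>
    exact smul_vecMulVec_sub_vecMulVec_mulVec_eq_zero _ _ _ (by decide) (by decide)
end

section
/- Let x_1,…,x_6 be nonzero elements of a field and set x_7 = (x_6² x_4⁴ x_2² + x_5⁶ x_3⁶)/x_1. Define y_1 = x_1 x_3² x_5/(x_2³ x_4³), y_2 = x_2 x_4² x_6/(x_3³ x_5³), and y_3 = x_3 x_5² x_7/(x_4³ x_6³). Then y_3 = (y_2² + 1)/(y_1 y_2³). In other words, the sixth-order recurrence x_{n+6} x_n = x_{n+5}² x_{n+3}⁴ x_{n+1}² + (x_{n+4} x_{n+2})⁶ induces on the reduced variables the planar map (y_1, y_2) ↦ (y_2, (y_2²+1)/(y_1 y_2³)). -/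
/-- The sixth-order recurrence `x_{n+6}x_n = x_{n+5}²x_{n+3}⁴x_{n+1}² + (x_{n+4}x_{n+2})⁶`
induces on the reduced variables `y_n = x_n x_{n+2}² x_{n+4}/(x_{n+1}³ x_{n+3}³)` the
planar map `(y₁,y₂) ↦ (y₂,(y₂²+1)/(y₁y₂³))`: with `x₇ = (x₆²x₄⁴x₂² + x₅⁶x₃⁶)/x₁`,
one has `y₃ = (y₂² + 1)/(y₁y₂³)`. -/
theorem sixth_order_reduces_to_planar_map {F : Type*} [Field F]
    (x1 x2 x3 x4 x5 x6 x7 y1 y2 y3 : F)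
    (h1 : x1 ≠ 0) (h2 : x2 ≠ 0) (h3 : x3 ≠ 0) (h4 : x4 ≠ 0) (h5 : x5 ≠ 0)
    (h6 : x6 ≠ 0)
    (hx7 : x7 = (x6 ^ 2 * x4 ^ 4 * x2 ^ 2 + x5 ^ 6 * x3 ^ 6) / x1)
    (hy1 : y1 = x1 * x3 ^ 2 * x5 / (x2 ^ 3 * x4 ^ 3))
    (hy2 : y2 = x2 * x4 ^ 2 * x6 / (x3 ^ 3 * x5 ^ 3))
    (hy3 : y3 = x3 * x5 ^ 2 * x7 / (x4 ^ 3 * x6 ^ 3)) :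
    y3 = (y2 ^ 2 + 1) / (y1 * y2 ^ 3) := by
  have e7 : x7 * x1 = x6 ^ 2 * x4 ^ 4 * x2 ^ 2 + x5 ^ 6 * x3 ^ 6 := by
    rw [hx7, div_mul_cancel₀ _ h1]
  have e1 : y1 * (x2 ^ 3 * x4 ^ 3) = x1 * x3 ^ 2 * x5 := by
    rw [hy1, div_mul_cancel₀ _ (by simp [h2, h4])]
  have e2 : y2 * (x3 ^ 3 * x5 ^ 3) = x2 * x4 ^ 2 * x6 := by
    rw [hy2, div_mul_cancel₀ _ (by simp [h3, h5])]
  have e3 : y3 * (x4 ^ 3 * x6 ^ 3) = x3 * x5 ^ 2 * x7 := by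
    rw [hy3, div_mul_cancel₀ _ (by simp [h4, h6])]
  have hy1' : y1 ≠ 0 := by
    rw [hy1]
    exact div_ne_zero (by simp [h1, h3, h5]) (by simp [h2, h4])
  have hy2' : y2 ≠ 0 := by
    rw [hy2]
    exact div_ne_zero (by simp [h2, h4, h6]) (by simp [h3, h5])
  have hD : x1 * x2 ^ 3 * x3 ^ 9 * x4 ^ 9 * x5 ^ 9 * x6 ^ 3 ≠ 0 := by
    simp [h1, h2, h3, h4, h5, h6]
  rw [eq_div_iff (by simp [hy1', hy2'])]
  apply mul_right_cancel₀ hD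
  linear_combination
    (y3 * y1 * x1 * x2 ^ 3 * x4 ^ 9 * x6 ^ 3 *
        (y2 ^ 2 * (x3 ^ 3 * x5 ^ 3) ^ 2 + y2 * (x3 ^ 3 * x5 ^ 3) * (x2 * x4 ^ 2 * x6) +
          (x2 * x4 ^ 2 * x6) ^ 2) -
      x1 * x2 ^ 3 * x3 ^ 3 * x4 ^ 9 * x5 ^ 3 * x6 ^ 3 *
        (y2 * (x3 ^ 3 * x5 ^ 3) + x2 * x4 ^ 2 * x6)) * e2 +
    (y3 * x1 * x2 ^ 3 * x4 ^ 12 * x6 ^ 6) * e1 +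
    (x1 ^ 2 * x2 ^ 3 * x3 ^ 2 * x4 ^ 9 * x5 * x6 ^ 3) * e3 +
    (x1 * x2 ^ 3 * x3 ^ 3 * x4 ^ 9 * x5 ^ 3 * x6 ^ 3) * e7
end

section
/- Let g_1(y_1,y_2) = y_2 and g_2(y_1,y_2) = (y_2²+1)/(y_1 y_2³), defined for y_1, y_2 nonzero (over ℝ or ℂ). Then the Jacobian determinant satisfies (∂g_1/∂y_1)(∂g_2/∂y_2) - (∂g_1/∂y_2)(∂g_2/∂y_1) = g_1 g_2/(y_1 y_2) at every point with y_1 y_2 ≠ 0. Consequently the reduced map of the sixth-order recurrence preserves the log-canonical two-form dy_2 ∧ dy_1/(y_1 y_2). -/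
/-- The reduced map `(y₁,y₂) ↦ (g₁,g₂) = (y₂,(y₂²+1)/(y₁y₂³))` of the sixth-order
recurrence has Jacobian determinant
`∂g₁/∂y₁ ∂g₂/∂y₂ - ∂g₁/∂y₂ ∂g₂/∂y₁ = g₁g₂/(y₁y₂)` wherever `y₁y₂ ≠ 0`;
consequently it preserves the log-canonical two-form `dy₂ ∧ dy₁/(y₁y₂)`. -/
theorem sixth_order_map_preserves_log_canonical_form (y1 y2 : ℝ) (h : y1 * y2 ≠ 0) :
    let g1 : ℝ → ℝ → ℝ := fun a b => b
    let g2 : ℝ → ℝ → ℝ := fun a b => (b ^ 2 + 1) / (a * b ^ 3)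
    deriv (fun t => g1 t y2) y1 * deriv (fun t => g2 y1 t) y2
        - deriv (fun t => g1 y1 t) y2 * deriv (fun t => g2 t y2) y1
      = g1 y1 y2 * g2 y1 y2 / (y1 * y2) := by
  have h1 : y1 ≠ 0 := fun hy => h (by rw [hy, zero_mul])
  have h2 : y2 ≠ 0 := fun hy => h (by rw [hy, mul_zero])
  intro g1 g2
  have e1 : deriv (fun t => g1 t y2) y1 = 0 := deriv_const _ _
  have e2 : deriv (fun t => g1 y1 t) y2 = 1 := deriv_id y2
  have e3 : (fun t => g2 t y2) = fun t => ((y2 ^ 2 + 1) / y2 ^ 3) * t⁻¹ := by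
    funext t
    simp [g2, div_eq_mul_inv, mul_inv]
    ring
  have e4 : deriv (fun t => g2 t y2) y1 = ((y2 ^ 2 + 1) / y2 ^ 3) * (-(y1 ^ 2)⁻¹) := by
    rw [e3, deriv_const_mul _ (differentiableAt_inv h1), deriv_inv]
  rw [e1, e2, e4]
  simp only [g1, g2]
  field_simp
  ring
end

section
/- Every orbit of the piecewise linear map (Y_1, Y_2) ↦ (Y_2, max(Y_2, 0) - Y_2 - Y_1) on ℝ² is periodic with period 7. Equivalently, any real sequence (Y_n) satisfying Y_{n+2} + Y_n = max(Y_{n+1}, 0) - Y_{n+1} for all n satisfies Y_{n+7} = Y_n for all n. -/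
/-! Once the signs of `Yₙ₊₁, …, Yₙ₊₆` are fixed, the six instances of the recurrence that link
`Yₙ` to `Yₙ₊₇` are linear, and in each of the `2⁶` sign patterns they force `Yₙ₊₇ = Yₙ`. The map
on `ℝ²` is the recurrence read through the pairs `(Yₙ, Yₙ₊₁)`. -/

open Function

variable {α : Type*}

def secondOrderMap (φ : α → α → α) (q : α × α) : α × α := (q.2, φ q.1 q.2)

section SecondOrderMap

variable (φ : α → α → α) (p : α × α)

theorem secondOrderMap_iterate_snd (n : ℕ) :
    ((secondOrderMap φ)^[n] p).2 = ((secondOrderMap φ)^[n + 1] p).1 := by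
  rw [iterate_succ_apply']
  rfl

theorem secondOrderMap_iterate_fst_add_two (n : ℕ) :
    ((secondOrderMap φ)^[n + 2] p).1 =
      φ ((secondOrderMap φ)^[n] p).1 ((secondOrderMap φ)^[n + 1] p).1 := by
  simp only [iterate_succ_apply', secondOrderMap]

theorem isPeriodicPt_secondOrderMap {k : ℕ}
    (h : ∀ Y : ℕ → α, (∀ n, Y (n + 2) = φ (Y n) (Y (n + 1))) → Periodic Y k) :
    IsPeriodicPt (secondOrderMap φ) k p := by
  have hY := h (fun n => ((secondOrderMap φ)^[n] p).1)
    (secondOrderMap_iterate_fst_add_two φ p)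
  have h0 : ((secondOrderMap φ)^[0 + k] p).1 = p.1 := hY 0
  have h1 : ((secondOrderMap φ)^[1 + k] p).1 = p.2 := hY 1
  rw [zero_add] at h0
  rw [add_comm, ← secondOrderMap_iterate_snd] at h1
  exact Prod.ext h0 h1

end SecondOrderMap

theorem periodic_seven_of_tropical_qrt {Y : ℕ → ℝ}
    (h : ∀ n, Y (n + 2) + Y n = max (Y (n + 1)) 0 - Y (n + 1)) : Periodic Y 7 := by
  intro n
  have h0 : Y (n + 2) + Y n = max (Y (n + 1)) 0 - Y (n + 1) := h n
  have h1 : Y (n + 3) + Y (n + 1) = max (Y (n + 2)) 0 - Y (n + 2) := h (n + 1)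
  have h2 : Y (n + 4) + Y (n + 2) = max (Y (n + 3)) 0 - Y (n + 3) := h (n + 2)
  have h3 : Y (n + 5) + Y (n + 3) = max (Y (n + 4)) 0 - Y (n + 4) := h (n + 3)
  have h4 : Y (n + 6) + Y (n + 4) = max (Y (n + 5)) 0 - Y (n + 5) := h (n + 4)
  have h5 : Y (n + 7) + Y (n + 5) = max (Y (n + 6)) 0 - Y (n + 6) := h (n + 5)
  simp only [max_def] at h0 h1 h2 h3 h4 h5
  split_ifs at h0 h1 h2 h3 h4 h5 <;> linarith

/-- Every orbit of the piecewise linear (tropical QRT) map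
`(Y₁,Y₂) ↦ (Y₂, [Y₂]₊ - Y₂ - Y₁)` on `ℝ²` is periodic with period 7;
equivalently, any real sequence satisfying
`Y_{n+2} + Y_n = [Y_{n+1}]₊ - Y_{n+1}` satisfies `Y_{n+7} = Y_n` for all `n`. -/
theorem tropical_qrt_period_seven :
    (∀ p : ℝ × ℝ,
        (fun q : ℝ × ℝ => (q.2, max q.2 0 - q.2 - q.1))^[7] p = p) ∧
      (∀ Y : ℕ → ℝ,
        (∀ n, Y (n + 2) + Y n = max (Y (n + 1)) 0 - Y (n + 1)) →
          ∀ n, Y (n + 7) = Y n) := by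
  refine ⟨fun p => isPeriodicPt_secondOrderMap (fun a b => max b 0 - b - a) p ?_,
    fun Y h => periodic_seven_of_tropical_qrt h⟩
  intro Y h
  exact periodic_seven_of_tropical_qrt fun n => by rw [h n]; ring
end

section
/- Let (d_n) be a real sequence satisfying the tropical Somos-5 recurrence d_{n+5} + d_n = max(d_{n+4} + d_{n+1}, d_{n+3} + d_{n+2}) for all n. Then the sequence Y_n = d_{n+3} + d_n - d_{n+2} - d_{n+1} satisfies the tropical QRT recurrence Y_{n+2} + Y_n = max(Y_{n+1}, 0) - Y_{n+1} for all n. -/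
/-- If `(d_n)` satisfies the tropical Somos-5 recurrence
`d_{n+5} + d_n = max(d_{n+4} + d_{n+1}, d_{n+3} + d_{n+2})`, then
`Y_n = d_{n+3} + d_n - d_{n+2} - d_{n+1}` satisfies the tropical QRT recurrence
`Y_{n+2} + Y_n = [Y_{n+1}]₊ - Y_{n+1}`. -/
theorem tropical_somos5_to_tropical_qrt (d : ℕ → ℝ)
    (hd : ∀ n, d (n + 5) + d n = max (d (n + 4) + d (n + 1)) (d (n + 3) + d (n + 2))) :
    ∀ n, (d (n + 2 + 3) + d (n + 2) - d (n + 2 + 2) - d (n + 2 + 1))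
          + (d (n + 3) + d n - d (n + 2) - d (n + 1))
        = max (d (n + 1 + 3) + d (n + 1) - d (n + 1 + 2) - d (n + 1 + 1)) 0
          - (d (n + 1 + 3) + d (n + 1) - d (n + 1 + 2) - d (n + 1 + 1)) := by
  intro n
  have h := hd n
  show (d (n + 5) + d (n + 2) - d (n + 4) - d (n + 3))
      + (d (n + 3) + d n - d (n + 2) - d (n + 1))
    = max (d (n + 4) + d (n + 1) - d (n + 3) - d (n + 2)) 0
      - (d (n + 4) + d (n + 1) - d (n + 3) - d (n + 2))
  rcases le_total (d (n + 4) + d (n + 1)) (d (n + 3) + d (n + 2)) with hc | hc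
  · rw [max_eq_right hc] at h
    rw [max_eq_right (by linarith : d (n + 4) + d (n + 1) - d (n + 3) - d (n + 2) ≤ 0)]
    linarith
  · rw [max_eq_left hc] at h
    rw [max_eq_left (by linarith : (0:ℝ) ≤ d (n + 4) + d (n + 1) - d (n + 3) - d (n + 2))]
    linarith
end

section
/- Let (d_n) be a real sequence satisfying the tropical Somos-5 recurrence d_{n+5} + d_n = max(d_{n+4} + d_{n+1}, d_{n+3} + d_{n+2}) for all n. Then (d_n) satisfies the constant-coefficient linear recurrence of order 10 given by (S⁷ - 1)(d_{n+3} + d_n - d_{n+2} - d_{n+1}) = 0, i.e. d_{n+10} + d_{n+7} - d_{n+9} - d_{n+8} = d_{n+3} + d_n - d_{n+2} - d_{n+1} for all n. -/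
set_option maxHeartbeats 2000000


/-- Any solution of the tropical Somos-5 recurrence
`d_{n+5} + d_n = max(d_{n+4} + d_{n+1}, d_{n+3} + d_{n+2})` satisfies the
order-10 constant-coefficient linear recurrence
`(S⁷ - 1)(d_{n+3} + d_n - d_{n+2} - d_{n+1}) = 0`, i.e.
`d_{n+10} + d_{n+7} - d_{n+9} - d_{n+8} = d_{n+3} + d_n - d_{n+2} - d_{n+1}`. -/
theorem tropical_somos5_linear_recurrence (d : ℕ → ℝ)
    (hd : ∀ n, d (n + 5) + d n = max (d (n + 4) + d (n + 1)) (d (n + 3) + d (n + 2))) :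
    ∀ n, d (n + 10) + d (n + 7) - d (n + 9) - d (n + 8)
        = d (n + 3) + d n - d (n + 2) - d (n + 1) := by
  intro n
  have h0 := hd n
  have h1 := hd (n + 1)
  have h2 := hd (n + 2)
  have h3 := hd (n + 3)
  have h4 := hd (n + 4)
  have h5 := hd (n + 5)
  simp only [add_assoc] at h1 h2 h3 h4 h5
  norm_num at h1 h2 h3 h4 h5
  rcases max_cases (d (n+4) + d (n+1)) (d (n+3) + d (n+2)) with ⟨e0, l0⟩ | ⟨e0, l0⟩ <;>
    rw [e0] at h0 <;>
  rcases max_cases (d (n+5) + d (n+2)) (d (n+4) + d (n+3)) with ⟨e1, l1⟩ | ⟨e1, l1⟩ <;>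
    rw [e1] at h1 <;>
  rcases max_cases (d (n+6) + d (n+3)) (d (n+5) + d (n+4)) with ⟨e2, l2⟩ | ⟨e2, l2⟩ <;>
    rw [e2] at h2 <;>
  rcases max_cases (d (n+7) + d (n+4)) (d (n+6) + d (n+5)) with ⟨e3, l3⟩ | ⟨e3, l3⟩ <;>
    rw [e3] at h3 <;>
  rcases max_cases (d (n+8) + d (n+5)) (d (n+7) + d (n+6)) with ⟨e4, l4⟩ | ⟨e4, l4⟩ <;>
    rw [e4] at h4 <;>
  rcases max_cases (d (n+9) + d (n+6)) (d (n+8) + d (n+7)) with ⟨e5, l5⟩ | ⟨e5, l5⟩ <;>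
    rw [e5] at h5 <;>
  linarith
end

section
/- Let (d_n) be a real sequence satisfying the tropical sixth-order recurrence d_{n+6} + d_n = max(2 d_{n+5} + 4 d_{n+3} + 2 d_{n+1}, 6 d_{n+4} + 6 d_{n+2}) for all n. Then the sequence Y_n = d_{n+4} + 2 d_{n+2} + d_n - 3 d_{n+3} - 3 d_{n+1} satisfies Y_{n+2} = 2 max(Y_{n+1}, 0) - 3 Y_{n+1} - Y_n for all n. -/
/-- If `(d_n)` satisfies the tropical sixth-order recurrence
`d_{n+6} + d n = max(2d_{n+5} + 4d_{n+3} + 2d_{n+1}, 6d_{n+4} + 6d_{n+2})`, then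
`Y_n = d_{n+4} + 2d_{n+2} + d_n - 3d_{n+3} - 3d_{n+1}` satisfies
`Y_{n+2} = 2[Y_{n+1}]₊ - 3Y_{n+1} - Y_n`. -/
theorem tropical_sixth_order_reduction (d : ℕ → ℝ)
    (hd : ∀ n, d (n + 6) + d n
        = max (2 * d (n + 5) + 4 * d (n + 3) + 2 * d (n + 1))
            (6 * d (n + 4) + 6 * d (n + 2))) :
    let Y : ℕ → ℝ := fun n =>
      d (n + 4) + 2 * d (n + 2) + d n - 3 * d (n + 3) - 3 * d (n + 1)
    ∀ n, Y (n + 2) = 2 * max (Y (n + 1)) 0 - 3 * Y (n + 1) - Y n := by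
  intro Y n
  have h := hd n
  have hY1 : Y (n + 1) = d (n + 5) + 2 * d (n + 3) + d (n + 1)
      - 3 * d (n + 4) - 3 * d (n + 2) := by
    simp only [Y]
  have key : max (2 * d (n + 5) + 4 * d (n + 3) + 2 * d (n + 1))
      (6 * d (n + 4) + 6 * d (n + 2))
      = 6 * d (n + 4) + 6 * d (n + 2) + 2 * max (Y (n + 1)) 0 := by
    rcases le_total (Y (n + 1)) 0 with h1 | h1
    · rw [max_eq_right h1, max_eq_right (by linarith : 2 * d (n + 5) + 4 * d (n + 3) + 2 * d (n + 1) ≤ 6 * d (n + 4) + 6 * d (n + 2))]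
      ring
    · rw [max_eq_left h1, max_eq_left (by linarith : 6 * d (n + 4) + 6 * d (n + 2) ≤ 2 * d (n + 5) + 4 * d (n + 3) + 2 * d (n + 1))]
      linarith
  have h6 : d (n + 6) = 6 * d (n + 4) + 6 * d (n + 2) + 2 * max (Y (n + 1)) 0 - d n := by
    rw [key] at h; linarith
  simp only [Y]
  have e : n + 2 + 4 = n + 6 := by ring
  rw [e, h6, hY1]
  ring_nf
end

section
/- Let (Y_n) be the integer sequence defined by Y_1 = 0, Y_2 = 1 and Y_{n+2} = 2 max(Y_{n+1}, 0) - 3 Y_{n+1} - Y_n for all n ≥ 1. Then Y_{n+12} = Y_n for all n ≥ 1; that is, this orbit of the piecewise linear map (Y_1, Y_2) ↦ (Y_2, 2 max(Y_2, 0) - 3 Y_2 - Y_1) is periodic with period 12 (the sequence reads 0, 1, -1, 2, -1, 1, 0, -1, 3, -2, 3, -1 and then repeats). -/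
/-- The orbit of the tropical map `(Y₁,Y₂) ↦ (Y₂, 2[Y₂]₊ - 3Y₂ - Y₁)` with initial
data `(Y₁,Y₂) = (0,1)` is periodic with period 12: if `Y 1 = 0`, `Y 2 = 1` and
`Y_{n+2} = 2 max(Y_{n+1},0) - 3Y_{n+1} - Y_n` for `n ≥ 1`, then `Y_{n+12} = Y_n`
for all `n ≥ 1` (the sequence reads `0,1,-1,2,-1,1,0,-1,3,-2,3,-1` and repeats). -/
theorem tropical_sixth_order_degree_orbit_period_twelve (Y : ℕ → ℤ)
    (h1 : Y 1 = 0) (h2 : Y 2 = 1)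
    (hrec : ∀ n, 1 ≤ n → Y (n + 2) = 2 * max (Y (n + 1)) 0 - 3 * Y (n + 1) - Y n) :
    ∀ n, 1 ≤ n → Y (n + 12) = Y n := by
  have h3 : Y 3 = -1 := by have := hrec 1 (by norm_num); rw [h1, h2] at this; simpa using this
  have h4 : Y 4 = 2 := by have := hrec 2 (by norm_num); rw [h2, h3] at this; simpa using this
  have h5 : Y 5 = -1 := by have := hrec 3 (by norm_num); rw [h3, h4] at this; simpa using this
  have h6 : Y 6 = 1 := by have := hrec 4 (by norm_num); rw [h4, h5] at this; simpa using this
  have h7 : Y 7 = 0 := by have := hrec 5 (by norm_num); rw [h5, h6] at this; simpa using this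
  have h8 : Y 8 = -1 := by have := hrec 6 (by norm_num); rw [h6, h7] at this; simpa using this
  have h9 : Y 9 = 3 := by have := hrec 7 (by norm_num); rw [h7, h8] at this; simpa using this
  have h10 : Y 10 = -2 := by have := hrec 8 (by norm_num); rw [h8, h9] at this; simpa using this
  have h11 : Y 11 = 3 := by have := hrec 9 (by norm_num); rw [h9, h10] at this; simpa using this
  have h12 : Y 12 = -1 := by have := hrec 10 (by norm_num); rw [h10, h11] at this; simpa using this
  have h13 : Y 13 = 0 := by have := hrec 11 (by norm_num); rw [h11, h12] at this; simpa using this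
  have h14 : Y 14 = 1 := by have := hrec 12 (by norm_num); rw [h12, h13] at this; simpa using this
  have key : ∀ n, 1 ≤ n → Y (n + 12) = Y n ∧ Y (n + 13) = Y (n + 1) := by
    intro n hn
    induction n, hn using Nat.le_induction with
    | base => refine ⟨?_, ?_⟩ <;> simp [h13, h14, h1, h2]
    | succ n hn ih =>
      obtain ⟨ihA, ihB⟩ := ih
      refine ⟨ihB, ?_⟩
      have e1 : Y (n + 1 + 13) = 2 * max (Y (n + 13)) 0 - 3 * Y (n + 13) - Y (n + 12) := by
        have := hrec (n + 12) (by omega)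
        convert this using 3 <;> omega
      have e2 : Y (n + 2) = 2 * max (Y (n + 1)) 0 - 3 * Y (n + 1) - Y n := hrec n hn
      rw [e1, ihA, ihB, ← e2]
  intro n hn
  exact (key n hn).1
end
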